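/- arXiv:2507.09480 — 2 statements merged into one kernel-verified Lean document; each statement's English description precedes it below -/
import Mathlib

section
/- If x_0, ..., x_N are real numbers with |x_i - x_j| ≥ h for all i ≠ j and |x_i| ≤ Kh for all i, where h > 0 and K > 0, then every entry of the inverse Vandermonde matrix satisfies |(W^{-1})_{(i+1)(j+1)}| ≤ C(N, N-i) · K^{N-i} · h^{-i}. -/
/-!
The `j`-th column of `W⁻¹` is the coefficient vector of the Lagrange basis polynomial
`ℓ_j = w_j ∏_{m ≠ j} (X - x_m)` with nodal weight `w_j = ∏_{m ≠ j} (x_j - x_m)⁻¹`.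
Separation gives `|w_j| ≤ h^{-N}`, and by Vieta the coefficient of `X^i` in the product is a
signed sum of `C(N, N-i)` products of `N - i` nodes, each at most `(K h)^{N-i}` in absolute value.
-/

open Finset Polynomial

namespace Lagrange

variable {ι : Type*}

theorem basis_eq_C_nodalWeight_mul_nodal_erase {F : Type*} [Field F] [DecidableEq ι]
    {s : Finset ι} {v : ι → F} {i : ι} (hi : i ∈ s) :
    Lagrange.basis s v i = C (nodalWeight s v i) * nodal (s.erase i) v := by
  rw [basis_eq_prod_sub_inv_mul_nodal_div hi, nodal_erase_eq_nodal_div hi]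

variable {K : Type*} [Field K] [LinearOrder K] [IsStrictOrderedRing K]

theorem abs_coeff_nodal_le {s : Finset ι} {v : ι → K} {M : K} (hv : ∀ j ∈ s, |v j| ≤ M) {k : ℕ}
    (hk : k ≤ #s) : |(nodal s v).coeff k| ≤ (#s).choose (#s - k) * M ^ (#s - k) := by
  have hcoeff : (nodal s v).coeff k = ∑ t ∈ s.powersetCard (#s - k), ∏ j ∈ t, -v j := by
    simp_rw [nodal, sub_eq_add_neg, ← map_neg C]
    exact prod_X_add_C_coeff s _ hk
  calc |(nodal s v).coeff k|
      ≤ ∑ t ∈ s.powersetCard (#s - k), ∏ j ∈ t, |v j| := by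
        rw [hcoeff]
        refine (abs_sum_le_sum_abs _ _).trans (sum_le_sum fun t _ => ?_)
        simp [abs_prod]
    _ ≤ ∑ t ∈ s.powersetCard (#s - k), M ^ (#s - k) := by
        refine sum_le_sum fun t ht => ?_
        obtain ⟨hts, htcard⟩ := mem_powersetCard.mp ht
        rw [← htcard, ← prod_const]
        exact prod_le_prod (fun _ _ => abs_nonneg _) fun j hj => hv j (hts hj)
    _ = (#s).choose (#s - k) * M ^ (#s - k) := by
        rw [sum_const, card_powersetCard, nsmul_eq_mul]

theorem abs_nodalWeight_le [DecidableEq ι] {s : Finset ι} {v : ι → K} {i : ι} {h : K}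
    (hh : 0 < h) (hsep : ∀ j ∈ s.erase i, h ≤ |v i - v j|) :
    |nodalWeight s v i| ≤ (h ^ #(s.erase i))⁻¹ := by
  rw [nodalWeight, abs_prod, ← inv_pow, ← prod_const]
  refine prod_le_prod (fun _ _ => abs_nonneg _) fun j hj => ?_
  rw [abs_inv]
  exact inv_anti₀ hh (hsep j hj)

end Lagrange

theorem Matrix.inv_vandermonde_apply {F : Type*} [Field F] {n : ℕ} {v : Fin n → F}
    (hv : Function.Injective v) (i j : Fin n) :
    (vandermonde v)⁻¹ i j = (Lagrange.basis univ v j).coeff i := by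
  set B : Matrix (Fin n) (Fin n) F := of fun k l => (Lagrange.basis univ v l).coeff k
  suffices vandermonde v * B = 1 by rw [inv_eq_right_inv this]; rfl
  ext r l
  have hdeg : (Lagrange.basis univ v l).natDegree < n := by
    rw [Lagrange.natDegree_basis hv.injOn (mem_univ l), card_univ, Fintype.card_fin]
    exact Nat.sub_lt l.pos one_pos
  calc (vandermonde v * B) r l = (Lagrange.basis univ v l).eval (v r) := by
        rw [eval_eq_sum_range' hdeg, ← Fin.sum_univ_eq_sum_range]
        simp only [B, mul_apply, vandermonde_apply, of_apply, mul_comm]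
    _ = (1 : Matrix (Fin n) (Fin n) F) r l := by
        obtain rfl | hrl := eq_or_ne r l
        · rw [Lagrange.eval_basis_self hv.injOn (mem_univ r), one_apply_eq]
        · rw [Lagrange.eval_basis_of_ne hrl.symm (mem_univ r), one_apply_ne hrl]

theorem inverse_vandermonde_entry_bound_general (N : ℕ) (x : Fin (N + 1) → ℝ) (h K : ℝ)
    (hh : 0 < h)
    (hsep : ∀ i j, i ≠ j → h ≤ |x i - x j|)
    (hbd : ∀ i, |x i| ≤ K * h) (i j : Fin (N + 1)) :
    |(Matrix.vandermonde x)⁻¹ i j| ≤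
      (N.choose (N - (i : ℕ))) * K ^ (N - (i : ℕ)) / h ^ (i : ℕ) := by
  have hinj : Function.Injective x := fun a b hab =>
    by_contra fun hne => (hsep a b hne).not_gt (by simpa [hab] using hh)
  have hcard : #(univ.erase j) = N := by simp
  have hweight := Lagrange.abs_nodalWeight_le (s := univ) (v := x) hh
    fun m hm => hsep j m (ne_of_mem_erase hm).symm
  have hnodal := Lagrange.abs_coeff_nodal_le (s := univ.erase j) (v := x) (k := i)
    (fun m _ => hbd m) (by rw [hcard]; omega)
  rw [hcard] at hweight hnodal
  rw [Matrix.inv_vandermonde_apply hinj, Lagrange.basis_eq_C_nodalWeight_mul_nodal_erase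
    (mem_univ j), coeff_C_mul, abs_mul]
  have hsplit : h ^ N = h ^ (N - (i : ℕ)) * h ^ (i : ℕ) := by
    rw [← pow_add, Nat.sub_add_cancel (Nat.lt_succ_iff.mp i.isLt)]
  calc |Lagrange.nodalWeight univ x j| * |(Lagrange.nodal (univ.erase j) x).coeff i|
      ≤ (h ^ N)⁻¹ * (N.choose (N - (i : ℕ)) * (K * h) ^ (N - (i : ℕ))) :=
        mul_le_mul hweight hnodal (abs_nonneg _) (by positivity)
    _ = (N.choose (N - (i : ℕ))) * K ^ (N - (i : ℕ)) / h ^ (i : ℕ) := by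
        rw [hsplit, mul_pow]
        field_simp

theorem inverse_vandermonde_entry_bound (N : ℕ) (x : Fin (N + 1) → ℝ) (h K : ℝ)
    (hh : 0 < h) (hK : 0 < K)
    (hsep : ∀ i j, i ≠ j → h ≤ |x i - x j|)
    (hbd : ∀ i, |x i| ≤ K * h) (i j : Fin (N + 1)) :
    |(Matrix.vandermonde x)⁻¹ i j| ≤
      (N.choose (N - (i : ℕ))) * K ^ (N - (i : ℕ)) / h ^ (i : ℕ) :=
  inverse_vandermonde_entry_bound_general N x h K hh hsep hbd i j
end

section
/- Under the hypotheses of the Vandermonde coefficient estimation theorem (pairwise separation h, sample points within Kh of 0, |f^{(N+1)}| ≤ M near 0), the estimated derivative f^{(i)}(0)^e := i!·a_i^e satisfies |f^{(i)}(0)^e - f^{(i)}(0)| ≤ M·K^{2N+1-i}·h^{N+1-i}/(N-i)! for each 0 ≤ i ≤ N. -/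
/-!
Let `P` be the degree-`N` Maclaurin polynomial of `f`. Since `deg P ≤ N`, `P` is its own
interpolant at the nodes `x_j`, so `a^e - coeff P` is the coefficient vector of the interpolant of
the Taylor remainders `f (x_j) - P (x_j)`, each of size at most `M (K h)^(N+1) / (N+1)!` by
Lagrange's form of the remainder. By Vieta, the `i`-th coefficient of the Lagrange basis
polynomial `∏_{k ≠ j} (X - x_k) / (x_j - x_k)` is at most `C(N, i) (K h)^(N-i) / h^N`; summing over
the `N + 1` nodes and multiplying by `i!` gives the bound, because `i! C(N, i) / N! = 1 / (N-i)!`.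
-/

open Finset Polynomial Set
open scoped Nat Matrix

theorem Matrix.vandermonde_inv_mulVec {F : Type*} [Field F] {n : ℕ} {v : Fin n → F}
    (hv : Function.Injective v) (y : Fin n → F) :
    (vandermonde v)⁻¹ *ᵥ y = fun k : Fin n => (Lagrange.interpolate univ v y).coeff k := by
  rcases Nat.eq_zero_or_pos n with rfl | hn
  · exact Subsingleton.elim _ _
  set p := Lagrange.interpolate univ v y
  have hdeg : p.natDegree < n := by
    rcases eq_or_ne p 0 with hp | hp
    · rwa [hp, natDegree_zero]
    · rw [natDegree_lt_iff_degree_lt hp]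
      simpa only [card_univ, Fintype.card_fin] using
        Lagrange.degree_interpolate_lt (s := univ) y hv.injOn
  have hW : vandermonde v *ᵥ (fun k : Fin n => p.coeff k) = y := by
    funext j
    rw [← Lagrange.eval_interpolate_at_node y hv.injOn (mem_univ j), eval_eq_sum_range' hdeg,
      ← Fin.sum_univ_eq_sum_range]
    simp only [mulVec, dotProduct, vandermonde_apply, mul_comm]
  rw [← hW, mulVec_mulVec, nonsing_inv_mul _ (isUnit_iff_ne_zero.mpr
    (det_vandermonde_ne_zero_iff.mpr hv)), one_mulVec]

theorem abs_coeff_prod_X_sub_C_le {ι : Type*} (s : Finset ι) {v : ι → ℝ} {B : ℝ}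
    (hv : ∀ k ∈ s, |v k| ≤ B) (i : ℕ) :
    |(∏ k ∈ s, (X - C (v k))).coeff i| ≤ (#s).choose i * B ^ (#s - i) := by
  rcases le_or_gt i #s with hi | hi
  · have hterm : ∀ t ∈ s.powersetCard (#s - i), |∏ k ∈ t, -v k| ≤ B ^ (#s - i) := by
      intro t ht
      obtain ⟨hts, hcard⟩ := mem_powersetCard.mp ht
      rw [abs_prod, ← hcard, ← prod_const]
      exact prod_le_prod (fun _ _ => abs_nonneg _) fun k hk => by rw [abs_neg]; exact hv k (hts hk)
    simp_rw [sub_eq_add_neg, ← map_neg C]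
    rw [prod_X_add_C_coeff s _ hi, ← Nat.choose_symm hi, ← card_powersetCard, ← nsmul_eq_mul,
      ← sum_const]
    exact (abs_sum_le_sum_abs _ _).trans (sum_le_sum hterm)
  · rw [coeff_eq_zero_of_natDegree_lt (by simpa using hi), Nat.choose_eq_zero_of_lt hi]
    simp

namespace Lagrange

variable {ι : Type*} [DecidableEq ι] {s : Finset ι} {v : ι → ℝ} {h B : ℝ}

theorem abs_coeff_basis_le (hh : 0 < h) {j : ι} (hj : j ∈ s)
    (hsep : ∀ k ∈ s, j ≠ k → h ≤ |v j - v k|) (hv : ∀ k ∈ s, |v k| ≤ B) (i : ℕ) :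
    |(Lagrange.basis s v j).coeff i| ≤ (#s - 1).choose i * B ^ (#s - 1 - i) / h ^ (#s - 1) := by
  have hcard : #(s.erase j) = #s - 1 := card_erase_of_mem hj
  have hscale : |∏ k ∈ s.erase j, (v j - v k)⁻¹| ≤ (h ^ (#s - 1))⁻¹ := by
    rw [abs_prod, ← inv_pow, ← hcard, ← prod_const]
    refine prod_le_prod (fun _ _ => abs_nonneg _) fun k hk => ?_
    rw [abs_inv]
    exact inv_anti₀ hh (hsep k (mem_of_mem_erase hk) (ne_of_mem_erase hk).symm)
  have hprod := abs_coeff_prod_X_sub_C_le (s.erase j) (fun k hk => hv k (mem_of_mem_erase hk)) i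
  rw [hcard] at hprod
  simp only [Lagrange.basis, basisDivisor]
  rw [prod_mul_distrib, ← map_prod, coeff_C_mul, abs_mul, div_eq_inv_mul]
  exact mul_le_mul hscale hprod (abs_nonneg _) (by positivity)

theorem abs_coeff_interpolate_le (hh : 0 < h)
    (hsep : ∀ j ∈ s, ∀ k ∈ s, j ≠ k → h ≤ |v j - v k|) (hv : ∀ k ∈ s, |v k| ≤ B)
    {r : ι → ℝ} {ε : ℝ} (hr : ∀ j ∈ s, |r j| ≤ ε) (i : ℕ) :
    |(interpolate s v r).coeff i| ≤
      #s * (ε * ((#s - 1).choose i * B ^ (#s - 1 - i) / h ^ (#s - 1))) := by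
  rw [interpolate_apply, finsetSum_coeff, ← nsmul_eq_mul, ← sum_const]
  refine (abs_sum_le_sum_abs _ _).trans (sum_le_sum fun j hj => ?_)
  rw [coeff_C_mul, abs_mul]
  exact mul_le_mul (hr j hj) (abs_coeff_basis_le hh hj (hsep j hj) hv i) (abs_nonneg _)
    ((abs_nonneg _).trans (hr j hj))

end Lagrange

noncomputable def maclaurinPoly (f : ℝ → ℝ) (n : ℕ) : ℝ[X] :=
  ∑ k : Fin (n + 1), C (iteratedDeriv k f 0 / (k : ℕ)!) * X ^ (k : ℕ)

theorem degree_maclaurinPoly_lt (f : ℝ → ℝ) (n : ℕ) : (maclaurinPoly f n).degree < ↑(n + 1) :=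
  degree_sum_fin_lt _

section Maclaurin

variable {f : ℝ → ℝ} {n : ℕ}

theorem coeff_maclaurinPoly {k : ℕ} (hk : k ≤ n) :
    (maclaurinPoly f n).coeff k = iteratedDeriv k f 0 / k ! := by
  simp only [maclaurinPoly, finsetSum_coeff, coeff_C_mul, coeff_X_pow]
  rw [Fin.sum_univ_eq_sum_range (fun m => iteratedDeriv m f 0 / m ! * if k = m then 1 else 0)]
  simp [Nat.lt_succ_of_le hk]

theorem eval_maclaurinPoly_eq_taylorWithinEval (hf : ContDiff ℝ n f) {y : ℝ} (hy : y ≠ 0) :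
    (maclaurinPoly f n).eval y = taylorWithinEval f n (uIcc 0 y) 0 y := by
  rw [taylor_within_apply, maclaurinPoly, eval_finsetSum, ← Fin.sum_univ_eq_sum_range]
  refine sum_congr rfl fun k _ => ?_
  rw [iteratedDerivWithin_eq_iteratedDeriv (uniqueDiffOn_uIcc hy.symm)
    (hf.contDiffAt.of_le (by exact_mod_cast k.is_le)) left_mem_uIcc]
  simp only [eval_mul, eval_C, eval_pow, eval_X, sub_zero, smul_eq_mul]
  ring

theorem abs_sub_eval_maclaurinPoly_le (hf : ContDiff ℝ (n + 1) f) {M R : ℝ}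
    (hbound : ∀ ζ : ℝ, |ζ| ≤ R → |iteratedDeriv (n + 1) f ζ| ≤ M) {y : ℝ} (hy : |y| ≤ R) :
    |f y - (maclaurinPoly f n).eval y| ≤ M * R ^ (n + 1) / (n + 1)! := by
  rcases eq_or_ne y 0 with rfl | hy0
  · have hM : 0 ≤ M := (abs_nonneg _).trans (hbound 0 hy)
    have hR : 0 ≤ R := (abs_nonneg 0).trans hy
    rw [← coeff_zero_eq_eval_zero, coeff_maclaurinPoly n.zero_le]
    simp only [iteratedDeriv_zero, Nat.factorial_zero, Nat.cast_one, div_one, sub_self, abs_zero]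
    positivity
  obtain ⟨ζ, hζ, hrem⟩ := taylor_mean_remainder_lagrange_iteratedDeriv hy0.symm hf.contDiffOn
  have hζy : |ζ| ≤ |y| := by
    simpa only [sub_zero] using abs_sub_left_of_mem_uIcc (uIoo_subset_uIcc_self hζ)
  have hζR : |ζ| ≤ R := hζy.trans hy
  rw [eval_maclaurinPoly_eq_taylorWithinEval hf.of_succ hy0, hrem, abs_div, abs_mul, abs_pow,
    sub_zero, Nat.abs_cast]
  have hM : 0 ≤ M := (abs_nonneg _).trans (hbound ζ hζR)
  gcongr
  exact hbound ζ hζR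

end Maclaurin

theorem factorial_mul_interpolation_error_eq {N i : ℕ} (hi : i ≤ N) (M K : ℝ) {h : ℝ}
    (hh : h ≠ 0) :
    (i ! : ℝ) * ((N + 1 : ℕ) * (M * (K * h) ^ (N + 1) / (N + 1)! *
      (N.choose i * (K * h) ^ (N - i) / h ^ N))) =
      M * K ^ (2 * N + 1 - i) * h ^ (N + 1 - i) / (N - i)! := by
  obtain ⟨d, rfl⟩ := Nat.exists_eq_add_of_le hi
  rw [show 2 * (i + d) + 1 - i = (i + d + 1) + d by omega, show i + d + 1 - i = d + 1 by omega,
    Nat.add_sub_cancel_left, Nat.cast_choose ℝ (Nat.le_add_right i d), Nat.add_sub_cancel_left,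
    Nat.factorial_succ]
  push_cast
  field_simp
  ring

theorem derivative_estimate_error_at_zero_general (N : ℕ) (f : ℝ → ℝ) (h K M : ℝ)
    (hh : 0 < h)
    (hf : ContDiff ℝ (N + 1) f)
    (hbound : ∀ ζ : ℝ, |ζ| ≤ K * h → |iteratedDeriv (N + 1) f ζ| ≤ M)
    (x : Fin (N + 1) → ℝ)
    (hsep : ∀ i j, i ≠ j → h ≤ |x i - x j|)
    (hbd : ∀ i, |x i| ≤ K * h)
    (ae : Fin (N + 1) → ℝ)
    (hae : ae = (Matrix.vandermonde x)⁻¹.mulVec (fun j => f (x j))) :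
    ∀ i : Fin (N + 1),
      |(i : ℕ).factorial * ae i - iteratedDeriv (i : ℕ) f 0| ≤
        M * K ^ (2 * N + 1 - (i : ℕ)) * h ^ (N + 1 - (i : ℕ)) /
          (N - (i : ℕ)).factorial := by
  intro i
  have hinj : Function.Injective x := fun a b hab =>
    by_contra fun hne => (hsep a b hne).not_gt (by rwa [hab, sub_self, abs_zero])
  set P := maclaurinPoly f N
  have hP : P = Lagrange.interpolate univ x (fun j => P.eval (x j)) :=
    Lagrange.eq_interpolate hinj.injOn (by simpa using degree_maclaurinPoly_lt f N)
  have hdiff : ae i - P.coeff i =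
      (Lagrange.interpolate univ x (fun j => f (x j) - P.eval (x j))).coeff i := by
    rw [hae, Matrix.vandermonde_inv_mulVec hinj]
    nth_rw 1 [hP]
    rw [← coeff_sub, ← map_sub]
    rfl
  have herr := Lagrange.abs_coeff_interpolate_le (s := univ) hh (fun j _ k _ => hsep j k)
    (fun k _ => hbd k) (fun j _ => abs_sub_eval_maclaurinPoly_le hf hbound (hbd j)) i
  rw [card_univ, Fintype.card_fin, Nat.add_sub_cancel] at herr
  have hfac : (i ! : ℝ) * ae i - iteratedDeriv i f 0 = i ! * (ae i - P.coeff i) := by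
    rw [coeff_maclaurinPoly (Nat.le_of_lt_succ i.is_lt)]
    field_simp
  rw [hfac, abs_mul, Nat.abs_cast, hdiff,
    ← factorial_mul_interpolation_error_eq (Nat.le_of_lt_succ i.is_lt) M K hh.ne']
  gcongr

theorem derivative_estimate_error_at_zero (N : ℕ) (f : ℝ → ℝ) (h K M : ℝ)
    (hh : 0 < h) (hK : 0 < K) (hM : 0 < M)
    (hf : ContDiff ℝ (N + 1) f)
    (hbound : ∀ ζ : ℝ, |ζ| ≤ K * h → |iteratedDeriv (N + 1) f ζ| ≤ M)
    (x : Fin (N + 1) → ℝ)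
    (hsep : ∀ i j, i ≠ j → h ≤ |x i - x j|)
    (hbd : ∀ i, |x i| ≤ K * h)
    (ae : Fin (N + 1) → ℝ)
    (hae : ae = (Matrix.vandermonde x)⁻¹.mulVec (fun j => f (x j))) :
    ∀ i : Fin (N + 1),
      |(i : ℕ).factorial * ae i - iteratedDeriv (i : ℕ) f 0| ≤
        M * K ^ (2 * N + 1 - (i : ℕ)) * h ^ (N + 1 - (i : ℕ)) /
          (N - (i : ℕ)).factorial :=
  derivative_estimate_error_at_zero_general N f h K M hh hf hbound x hsep hbd ae hae
end
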